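/- Let q ≥ 2, Q ≥ 1, and let (ℓ,σ) ∈ ℤ^{2q} × {-1,1}^{2q} satisfy zero momentum σ_1ℓ_1 + ⋯ + σ_{2q}ℓ_{2q} = 0 and the near-resonance bound |σ_1ℓ_1² + ⋯ + σ_{2q}ℓ_{2q}²| ≤ Q, and assume no pairing between the two highest modes. Then |ℓ_1^*| ≤ C_q (Q + |ℓ_3^*|²) for some constant C_q depending only on q. (This extends the exact-resonance implication to near-resonances with divisor of size at most Q, as needed for the convergent normal form where only terms with divisor ≳ q⁹ are removed.) -/
import Mathlib

set_option maxHeartbeats 1000000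

/-- near-resonant version: if the divisor satisfies
`|Σ σ_j ℓ_j²| ≤ Q` and there is no pairing between the two highest modes, then
`|ℓ_1^*| ≤ C_q (Q + |ℓ_3^*|²)`. -/
theorem stmt17 (q : ℕ) (hq : 2 ≤ q) :
    ∃ C : ℝ, 0 < C ∧
      ∀ (Q : ℝ), 1 ≤ Q →
      ∀ (ℓ σ : Fin (2 * q) → ℤ),
        (∀ i, σ i = 1 ∨ σ i = -1) →
        (∑ i, σ i * ℓ i) = 0 →
        (|∑ i, σ i * (ℓ i) ^ 2| : ℝ) ≤ Q →
        ∀ φ : Equiv.Perm (Fin (2 * q)),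
          (∀ i j : Fin (2 * q), i ≤ j → |ℓ (φ j)| ≤ |ℓ (φ i)|) →
          (¬ ∃ j1 j2 : Fin (2 * q), j1 ≠ j2 ∧ ℓ j1 = ℓ j2 ∧ σ j1 = -σ j2 ∧
              |ℓ j1| = |ℓ (φ ⟨0, by omega⟩)|) →
          (|ℓ (φ ⟨0, by omega⟩)| : ℝ) ≤ C * (Q + (|ℓ (φ ⟨2, by omega⟩)| : ℝ) ^ 2) := by
  refine ⟨2 * q, ?_, ?_⟩
  · have h : (0 : ℕ) < 2 * q := by omega
    exact_mod_cast h
  intro Q hQ ℓ σ hσ hmom hdiv φ hsort hnp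
  have hn : 4 ≤ 2 * q := by omega
  set i0 : Fin (2 * q) := ⟨0, by omega⟩ with hi0def
  set i1 : Fin (2 * q) := ⟨1, by omega⟩ with hi1def
  set i2 : Fin (2 * q) := ⟨2, by omega⟩ with hi2def
  set x := ℓ (φ i0) with hxdef
  set y := ℓ (φ i1) with hydef
  set s := σ (φ i0) with hsdef
  set t := σ (φ i1) with htdef
  set c := |ℓ (φ i2)| with hcdef
  have hc0 : (0 : ℤ) ≤ c := abs_nonneg _
  have h01 : i1 ≠ i0 := by simp [hi0def, hi1def, Fin.ext_iff]
  set R : Finset (Fin (2 * q)) := (Finset.univ.erase i0).erase i1 with hRdef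
  have hmemR : ∀ i ∈ R, i2 ≤ i := by
    intro i hi
    rw [hRdef, Finset.mem_erase, Finset.mem_erase] at hi
    have h1 : i ≠ i1 := hi.1
    have h2 : i ≠ i0 := hi.2.1
    rw [Fin.ne_iff_vne] at h1 h2
    simp only [hi0def, hi1def] at h1 h2
    rw [Fin.le_def]
    simp only [hi2def]
    omega
  have hcardR : (R.card : ℤ) = 2 * (q : ℤ) - 2 := by
    rw [hRdef, Finset.card_erase_of_mem (Finset.mem_erase.mpr ⟨h01, Finset.mem_univ _⟩),
      Finset.card_erase_of_mem (Finset.mem_univ _), Finset.card_univ, Fintype.card_fin]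
    omega
  have hsplit : ∀ g : Fin (2 * q) → ℤ, (∑ i, g i) =
      g (φ i0) + (g (φ i1) + ∑ i ∈ R, g (φ i)) := by
    intro g
    rw [← Equiv.sum_comp φ g, hRdef,
      Finset.add_sum_erase _ (fun i => g (φ i))
        (Finset.mem_erase.mpr ⟨h01, Finset.mem_univ _⟩),
      Finset.add_sum_erase _ (fun i => g (φ i)) (Finset.mem_univ i0)]
  -- bound on the absolute value of σ
  have habsσ : ∀ i, |σ i| = 1 := by
    intro i; rcases hσ i with h | h <;> simp [h]
  -- tail bounds
  have hT1 : |∑ i ∈ R, σ (φ i) * ℓ (φ i)| ≤ (2 * (q : ℤ) - 2) * c := by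
    calc |∑ i ∈ R, σ (φ i) * ℓ (φ i)| ≤ ∑ i ∈ R, |σ (φ i) * ℓ (φ i)| :=
          Finset.abs_sum_le_sum_abs _ _
      _ ≤ R.card • c := by
          refine Finset.sum_le_card_nsmul _ _ _ (fun i hi => ?_)
          rw [abs_mul, habsσ, one_mul]
          exact hsort i2 i (hmemR i hi)
      _ = (2 * (q : ℤ) - 2) * c := by rw [nsmul_eq_mul, hcardR]
  have hT2 : |∑ i ∈ R, σ (φ i) * (ℓ (φ i)) ^ 2| ≤ (2 * (q : ℤ) - 2) * c ^ 2 := by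
    calc |∑ i ∈ R, σ (φ i) * (ℓ (φ i)) ^ 2| ≤ ∑ i ∈ R, |σ (φ i) * (ℓ (φ i)) ^ 2| :=
          Finset.abs_sum_le_sum_abs _ _
      _ ≤ R.card • c ^ 2 := by
          refine Finset.sum_le_card_nsmul _ _ _ (fun i hi => ?_)
          rw [abs_mul, habsσ, one_mul, abs_pow]
          have := hsort i2 i (hmemR i hi)
          have h0 : (0 : ℤ) ≤ |ℓ (φ i)| := abs_nonneg _
          nlinarith
      _ = (2 * (q : ℤ) - 2) * c ^ 2 := by rw [nsmul_eq_mul, hcardR]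
  -- momentum: s*x + t*y = - tail
  have hmom' : s * x + t * y = -∑ i ∈ R, σ (φ i) * ℓ (φ i) := by
    have := hsplit (fun i => σ i * ℓ i)
    rw [hmom] at this
    simp only [← hxdef, ← hydef, ← hsdef, ← htdef] at this
    linarith
  have hM : |s * x + t * y| ≤ (2 * (q : ℤ) - 2) * c := by
    rw [hmom', abs_neg]; exact hT1
  -- divisor bound, as a cast of an integer absolute value
  have hdivZ : ((|∑ i, σ i * (ℓ i) ^ 2| : ℤ) : ℝ) ≤ Q := by
    push_cast
    exact hdiv
  have hDint : |s * x ^ 2 + t * y ^ 2| ≤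
      |∑ i, σ i * (ℓ i) ^ 2| + (2 * (q : ℤ) - 2) * c ^ 2 := by
    have hs := hsplit (fun i => σ i * (ℓ i) ^ 2)
    simp only [← hxdef, ← hydef, ← hsdef, ← htdef] at hs
    have heq : s * x ^ 2 + t * y ^ 2 =
        (∑ i, σ i * (ℓ i) ^ 2) - ∑ i ∈ R, σ (φ i) * (ℓ (φ i)) ^ 2 := by
      rw [hs]; ring
    rw [heq]
    calc |(∑ i, σ i * (ℓ i) ^ 2) - ∑ i ∈ R, σ (φ i) * (ℓ (φ i)) ^ 2| ≤
        |∑ i, σ i * (ℓ i) ^ 2| + |∑ i ∈ R, σ (φ i) * (ℓ (φ i)) ^ 2| := abs_sub _ _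
      _ ≤ _ := by linarith
  have hD : ((|s * x ^ 2 + t * y ^ 2| : ℤ) : ℝ) ≤ Q + (2 * (q : ℝ) - 2) * (c : ℝ) ^ 2 := by
    have h1 : ((|s * x ^ 2 + t * y ^ 2| : ℤ) : ℝ) ≤
        ((|∑ i, σ i * (ℓ i) ^ 2| + (2 * (q : ℤ) - 2) * c ^ 2 : ℤ) : ℝ) := by
      exact_mod_cast hDint
    calc ((|s * x ^ 2 + t * y ^ 2| : ℤ) : ℝ) ≤
        ((|∑ i, σ i * (ℓ i) ^ 2| : ℤ) : ℝ) + (2 * (q : ℝ) - 2) * (c : ℝ) ^ 2 := by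
          push_cast at h1 ⊢; linarith
      _ ≤ Q + (2 * (q : ℝ) - 2) * (c : ℝ) ^ 2 := by linarith [hdivZ]
  -- auxiliary facts
  have hq1 : (1 : ℝ) ≤ (q : ℝ) := by exact_mod_cast Nat.one_le_of_lt hq
  have hcR : (0 : ℝ) ≤ (c : ℝ) := by exact_mod_cast hc0
  have hcc : (c : ℤ) ≤ c ^ 2 := by nlinarith
  have hccR : (c : ℝ) ≤ (c : ℝ) ^ 2 := by exact_mod_cast hcc
  have hQ0 : (0 : ℝ) ≤ Q := by linarith
  -- the "no pairing" consequence in the opposite-sign case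
  have hnp' : s = -t → x ≠ y := by
    intro hst hxy
    exact hnp ⟨φ i0, φ i1, φ.injective.ne_iff.mpr (Ne.symm h01), hxy,
      by rw [← hsdef, ← htdef, hst], rfl⟩
  -- key estimate in the opposite sign case
  have hopp : s = -t → (|x| : ℝ) ≤ (2 * q : ℝ) * (Q + (c : ℝ) ^ 2) := by
    intro hst
    have hxy : x ≠ y := hnp' hst
    have h1le : (1 : ℤ) ≤ |x - y| := Int.one_le_abs (sub_ne_zero.mpr hxy)
    have hst2 : t = -s := by rw [hst]; ring
    have hs2 : s * s = 1 := by
      rcases hσ (φ i0) with h | h <;> rw [← hsdef] at h <;> rw [h] <;> ring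
    have hMeq : s * x + t * y = s * (x - y) := by rw [hst2]; ring
    have hM' : |x - y| ≤ (2 * (q : ℤ) - 2) * c := by
      rw [hMeq, abs_mul, habsσ, one_mul] at hM
      exact hM
    have hDeq : s * x ^ 2 + t * y ^ 2 = s * ((x - y) * (x + y)) := by rw [hst2]; ring
    have hD' : ((|x - y| * |x + y| : ℤ) : ℝ) ≤ Q + (2 * (q : ℝ) - 2) * (c : ℝ) ^ 2 := by
      rw [hDeq, abs_mul, habsσ, one_mul, abs_mul] at hD
      exact hD
    have h1leR : (1 : ℝ) ≤ (|x - y| : ℝ) := by exact_mod_cast h1le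
    have hMR : (|x - y| : ℝ) ≤ (2 * (q : ℝ) - 2) * (c : ℝ) := by exact_mod_cast hM'
    have habR : (0 : ℝ) ≤ (|x + y| : ℝ) := by exact_mod_cast abs_nonneg (x + y)
    have hsumR : (|x + y| : ℝ) ≤ Q + (2 * (q : ℝ) - 2) * (c : ℝ) ^ 2 := by
      have hmul : (|x + y| : ℝ) ≤ (|x - y| : ℝ) * (|x + y| : ℝ) :=
        le_mul_of_one_le_left habR h1leR
      have : ((|x - y| * |x + y| : ℤ) : ℝ) = (|x - y| : ℝ) * (|x + y| : ℝ) := by push_cast; ring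
      rw [this] at hD'
      linarith
    have h2x : (2 : ℤ) * |x| ≤ |x + y| + |x - y| := by
      have h := abs_add_le (x + y) (x - y)
      have h2 : |(x + y) + (x - y)| = 2 * |x| := by
        rw [show (x + y) + (x - y) = 2 * x from by ring, abs_mul]
        norm_num
      rw [h2] at h
      exact h
    have h2xR : (2 : ℝ) * (|x| : ℝ) ≤ (|x + y| : ℝ) + (|x - y| : ℝ) := by exact_mod_cast h2x
    nlinarith
  -- key estimate in the same sign case
  have hsame : s = t → (|x| : ℝ) ≤ (2 * q : ℝ) * (Q + (c : ℝ) ^ 2) := by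
    intro hst
    have hDeq : s * x ^ 2 + t * y ^ 2 = s * (x ^ 2 + y ^ 2) := by rw [hst]; ring
    have hD' : ((x ^ 2 + y ^ 2 : ℤ) : ℝ) ≤ Q + (2 * (q : ℝ) - 2) * (c : ℝ) ^ 2 := by
      rw [hDeq, abs_mul, habsσ, one_mul, abs_of_nonneg (by positivity : (0:ℤ) ≤ x ^ 2 + y ^ 2)]
        at hD
      exact hD
    have hxx : |x| ≤ x ^ 2 := by
      nlinarith [abs_nonneg x, sq_abs x, le_abs_self x]
    have hxxR : (|x| : ℝ) ≤ (x : ℝ) ^ 2 := by exact_mod_cast hxx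
    have hD'' : (x : ℝ) ^ 2 + (y : ℝ) ^ 2 ≤ Q + (2 * (q : ℝ) - 2) * (c : ℝ) ^ 2 := by
      push_cast at hD'
      linarith
    nlinarith [sq_nonneg (y : ℝ), sq_nonneg (c : ℝ)]
  have goal' : (|x| : ℝ) ≤ (2 * q : ℝ) * (Q + (c : ℝ) ^ 2) := by
    rcases hσ (φ i0) with hs1 | hs1 <;> rcases hσ (φ i1) with ht1 | ht1 <;>
      rw [← hsdef] at hs1 <;> rw [← htdef] at ht1
    · exact hsame (by rw [hs1, ht1]; try norm_num)
    · exact hopp (by rw [hs1, ht1]; try norm_num)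
    · exact hopp (by rw [hs1, ht1]; try norm_num)
    · exact hsame (by rw [hs1, ht1]; try norm_num)
  calc (|ℓ (φ ⟨0, by omega⟩)| : ℝ) = (|x| : ℝ) := rfl
    _ ≤ (2 * q : ℝ) * (Q + (c : ℝ) ^ 2) := goal'
    _ = (2 * q : ℝ) * (Q + (|ℓ (φ ⟨2, by omega⟩)| : ℝ) ^ 2) := by rw [hcdef]; push_cast; ring
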